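/- arXiv:2302.01611 — 8 statements merged into one kernel-verified Lean document; each statement's English description precedes it below -/
import Mathlib

section
/- Let A, B be n×n symmetric matrices over a field K such that im(A) ∩ im(B) = 0. Then rank(A+B) = rank(A) + rank(B). -/
/-- For symmetric matrices `A`, `B` with `im A ∩ im B = 0`,
`rank (A + B) = rank A + rank B`. -/
theorem stmt_1 {K : Type*} [Field K] {n : ℕ} (A B : Matrix (Fin n) (Fin n) K)
    (hA : A.IsSymm) (hB : B.IsSymm)
    (h : LinearMap.range A.mulVecLin ⊓ LinearMap.range B.mulVecLin = ⊥) :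
    (A + B).rank = A.rank + B.rank := by
  classical
  set M : Matrix (Fin n ⊕ Fin n) (Fin n) K := Matrix.fromRows A B with hM
  -- kernels coincide
  have hker : LinearMap.ker (A + B).mulVecLin = LinearMap.ker M.mulVecLin := by
    ext x
    simp only [LinearMap.mem_ker, Matrix.mulVecLin_apply, hM, Matrix.fromRows_mulVec,
      Matrix.add_mulVec]
    constructor
    · intro hx
      have hmem : A.mulVec x ∈ LinearMap.range A.mulVecLin ⊓ LinearMap.range B.mulVecLin := by
        refine ⟨⟨x, rfl⟩, ⟨-x, ?_⟩⟩
        have : B.mulVec x = -(A.mulVec x) := by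
          rw [eq_neg_iff_add_eq_zero, add_comm]; exact hx
        simp [Matrix.mulVecLin_apply, Matrix.mulVec_neg, this]
      rw [h, Submodule.mem_bot] at hmem
      have hBx : B.mulVec x = 0 := by
        have := hx; rw [hmem, zero_add] at this; exact this
      funext i
      rcases i with i | i
      · simp [hmem]
      · simp [hBx]
    · intro hx
      have h1 : A.mulVec x = 0 := by
        funext i; exact congrFun hx (Sum.inl i)
      have h2 : B.mulVec x = 0 := by
        funext i; exact congrFun hx (Sum.inr i)
      rw [h1, h2, add_zero]
  -- rank of M equals rank A + rank B
  have hMT : M.transpose = Matrix.fromCols A B := by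
    rw [hM, Matrix.transpose_fromRows, hA.eq, hB.eq]
  have hrange : LinearMap.range (Matrix.fromCols A B).mulVecLin
      = LinearMap.range A.mulVecLin ⊔ LinearMap.range B.mulVecLin := by
    apply le_antisymm
    · rintro _ ⟨v, rfl⟩
      have hv : v = Sum.elim (v ∘ Sum.inl) (v ∘ Sum.inr) := by
        funext i; rcases i with i | i <;> rfl
      rw [Matrix.mulVecLin_apply, hv, Matrix.fromCols_mulVec_sumElim]
      exact Submodule.add_mem_sup ⟨v ∘ Sum.inl, rfl⟩ ⟨v ∘ Sum.inr, rfl⟩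
    · rw [sup_le_iff]
      constructor
      · rintro _ ⟨v, rfl⟩
        refine ⟨Sum.elim v 0, ?_⟩
        simp [Matrix.mulVecLin_apply, Matrix.fromCols_mulVec_sumElim]
      · rintro _ ⟨v, rfl⟩
        refine ⟨Sum.elim 0 v, ?_⟩
        simp [Matrix.mulVecLin_apply, Matrix.fromCols_mulVec_sumElim]
  have hMrank : M.rank = A.rank + B.rank := by
    rw [← Matrix.rank_transpose M, hMT]
    unfold Matrix.rank
    rw [hrange]
    have := Submodule.finrank_sup_add_finrank_inf_eq
      (LinearMap.range A.mulVecLin) (LinearMap.range B.mulVecLin)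
    rw [h] at this
    simpa using this
  -- rank-nullity on both sides
  have r1 := LinearMap.finrank_range_add_finrank_ker (A + B).mulVecLin
  have r2 := LinearMap.finrank_range_add_finrank_ker M.mulVecLin
  rw [hker] at r1
  have : (A + B).rank + Module.finrank K (LinearMap.ker M.mulVecLin)
      = M.rank + Module.finrank K (LinearMap.ker M.mulVecLin) := by
    unfold Matrix.rank
    rw [r1, r2]
  have := Nat.add_right_cancel this
  rw [this, hMrank]
end

section
/- Let A, B be n×n symmetric matrices. If rank(A − B) ≤ 1 and rank(A − B) < rank(A) + rank(B), with rank(B) = 1 and rank(A) ≥ 1, then im(B) ⊆ im(A). -/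
open Matrix

/-- A matrix of rank at most one has all its columns multiples of a single vector. -/
lemma aux_exists_col {K : Type*} [Field K] {n : ℕ} (M : Matrix (Fin n) (Fin n) K)
    (hr : M.rank ≤ 1) :
    ∃ v : Fin n → K, ∀ u : Fin n → K, ∃ c : K, M.mulVec u = c • v := by
  rw [Matrix.rank] at hr
  obtain ⟨v₀, hv₀⟩ := finrank_le_one_iff.mp hr
  refine ⟨(v₀ : Fin n → K), fun u => ?_⟩
  obtain ⟨c, hc⟩ := hv₀ ⟨M.mulVec u, LinearMap.mem_range.mpr ⟨u, rfl⟩⟩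
  exact ⟨c, by simpa using congrArg Subtype.val hc.symm⟩

/-- A symmetric matrix of rank at most one is `c * x i * x j`. -/
lemma aux_symm_struct {K : Type*} [Field K] {n : ℕ} (M : Matrix (Fin n) (Fin n) K)
    (hs : M.IsSymm) (hr : M.rank ≤ 1) :
    ∃ (x : Fin n → K) (c : K), ∀ i j, M i j = c * x i * x j := by
  by_cases hM : M = 0
  · exact ⟨0, 0, by simp [hM]⟩
  obtain ⟨v, hv⟩ := aux_exists_col M hr
  -- columns: M i j = t j * v i
  choose t ht using fun j => hv (Pi.single j 1)
  have hcol : ∀ i j, M i j = t j * v i := by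
    intro i j
    have := congrFun (ht j) i
    simpa [Matrix.mulVec_single, mul_comm] using this
  -- find nonzero entry
  have hex : ∃ i j, M i j ≠ 0 := by
    by_contra h
    push_neg at h
    exact hM (by ext i j; exact h i j)
  obtain ⟨i0, j0, hij⟩ := hex
  have hvi0 : v i0 ≠ 0 := fun h => hij (by rw [hcol i0 j0, h, mul_zero])
  have hsymm : ∀ i j, t j * v i = t i * v j := by
    intro i j
    rw [← hcol i j, ← hcol j i]
    exact hs.apply j i
  have htj : ∀ j, t j = (t i0 / v i0) * v j := by
    intro j
    have := hsymm i0 j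
    field_simp
    linear_combination this
  refine ⟨v, t i0 / v i0, fun i j => ?_⟩
  rw [hcol i j, htj j]
  ring

/-- If `∀ i j, M i j = c * x i * x j` then `M.mulVec u = (c * (x ⬝ᵥ u)) • x`. -/
lemma aux_mulVec {K : Type*} [Field K] {n : ℕ} {M : Matrix (Fin n) (Fin n) K}
    {x : Fin n → K} {c : K} (h : ∀ i j, M i j = c * x i * x j) (u : Fin n → K) :
    M.mulVec u = (c * (x ⬝ᵥ u)) • x := by
  funext i
  have e1 : M.mulVec u i = ∑ j, M i j * u j := rfl
  have e2 : x ⬝ᵥ u = ∑ j, x j * u j := rfl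
  rw [e1, Pi.smul_apply, smul_eq_mul, e2, Finset.mul_sum, Finset.sum_mul]
  refine Finset.sum_congr rfl fun j _ => ?_
  rw [h i j]; ring

/-- Two-term version. -/
lemma aux_mulVec2 {K : Type*} [Field K] {n : ℕ} {M : Matrix (Fin n) (Fin n) K}
    {x w : Fin n → K} {c d : K} (h : ∀ i j, M i j = c * x i * x j + d * w i * w j)
    (u : Fin n → K) :
    M.mulVec u = (c * (x ⬝ᵥ u)) • x + (d * (w ⬝ᵥ u)) • w := by
  funext i
  have e1 : M.mulVec u i = ∑ j, M i j * u j := rfl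
  have e2 : x ⬝ᵥ u = ∑ j, x j * u j := rfl
  have e3 : w ⬝ᵥ u = ∑ j, w j * u j := rfl
  rw [e1, Pi.add_apply, Pi.smul_apply, Pi.smul_apply, smul_eq_mul, smul_eq_mul, e2, e3,
    Finset.mul_sum, Finset.mul_sum, Finset.sum_mul, Finset.sum_mul, ← Finset.sum_add_distrib]
  refine Finset.sum_congr rfl fun j _ => ?_
  rw [h i j]; ring

/-- Contrapositive form of rank additivity: if symmetric `A`, `B`
satisfy `rank (A - B) ≤ 1`, `rank (A - B) < rank A + rank B`, `rank B = 1` and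
`rank A ≥ 1`, then `im B ⊆ im A`. -/
theorem stmt_4 {K : Type*} [Field K] {n : ℕ} (A B : Matrix (Fin n) (Fin n) K)
    (hA : A.IsSymm) (hB : B.IsSymm)
    (h1 : (A - B).rank ≤ 1) (h2 : (A - B).rank < A.rank + B.rank)
    (hrkB : B.rank = 1) (hrkA : 1 ≤ A.rank) :
    LinearMap.range B.mulVecLin ≤ LinearMap.range A.mulVecLin := by
  obtain ⟨x, c, hBx⟩ := aux_symm_struct B hB (le_of_eq hrkB)
  have hABsymm : (A - B).IsSymm := by
    unfold Matrix.IsSymm at *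
    rw [Matrix.transpose_sub, hA, hB]
  obtain ⟨w, d, hCw⟩ := aux_symm_struct (A - B) hABsymm h1
  have hAx : ∀ i j, A i j = c * x i * x j + d * w i * w j := by
    intro i j
    have : A i j = B i j + (A - B) i j := by simp
    rw [this, hBx i j, hCw i j]
  -- B ≠ 0
  have hBne : B ≠ 0 := by
    intro h
    rw [h, Matrix.rank_zero] at hrkB
    exact one_ne_zero hrkB.symm
  have hexB : ∃ i j, B i j ≠ 0 := by
    by_contra h
    push_neg at h
    exact hBne (by ext i j; exact h i j)
  obtain ⟨i0, j0, hB0⟩ := hexB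
  have hc : c ≠ 0 := fun h => hB0 (by rw [hBx i0 j0, h]; ring)
  have hxi0 : x i0 ≠ 0 := fun h => hB0 (by rw [hBx i0 j0, h]; ring)
  -- key: x ∈ range A.mulVecLin
  have hxmem : x ∈ LinearMap.range A.mulVecLin := by
    by_cases hcase : ∃ u : Fin n → K, w ⬝ᵥ u = 0 ∧ x ⬝ᵥ u ≠ 0
    · obtain ⟨u, hwu, hxu⟩ := hcase
      have hAu : A.mulVec u = (c * (x ⬝ᵥ u)) • x := by
        rw [aux_mulVec2 hAx u, hwu]; simp
      refine ⟨(c * (x ⬝ᵥ u))⁻¹ • u, ?_⟩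
      rw [Matrix.mulVecLin_apply, Matrix.mulVec_smul, hAu, smul_smul,
        inv_mul_cancel₀ (mul_ne_zero hc hxu), one_smul]
    · -- x is a multiple of w
      push_neg at hcase
      -- w ≠ 0 (else x ⬝ᵥ single i0 = x i0 ≠ 0 with w ⬝ᵥ _ = 0)
      have hwne : ∃ k, w k ≠ 0 := by
        by_contra h
        push_neg at h
        have hw0 : w ⬝ᵥ Pi.single i0 (1:K) = 0 := by
          simp [h i0]
        have hx0 := hcase _ hw0
        simp at hx0
        exact hxi0 hx0
      obtain ⟨k, hwk⟩ := hwne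
      have hmul : ∀ i, x i = (x k / w k) * w i := by
        intro i
        have hw0 : w ⬝ᵥ ((Pi.single i (1:K) : Fin n → K) - (w i / w k) • (Pi.single k (1:K) : Fin n → K)) = 0 := by
          rw [dotProduct_sub, dotProduct_smul]
          simp only [dotProduct_single, mul_one, smul_eq_mul]
          field_simp
          ring
        have hx0 := hcase _ hw0
        rw [dotProduct_sub, dotProduct_smul, sub_eq_zero] at hx0
        simp only [dotProduct_single, mul_one, smul_eq_mul] at hx0
        rw [hx0]
        field_simp
      set s := x k / w k with hs
      have hsne : s ≠ 0 := fun h => hxi0 (by rw [hmul i0, h, zero_mul])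
      have hwi : ∀ i, w i = s⁻¹ * x i := by
        intro i
        rw [hmul i]
        field_simp
      have hAe : ∀ i j, A i j = (c + d * s⁻¹ * s⁻¹) * x i * x j := by
        intro i j
        rw [hAx i j, hwi i, hwi j]
        ring
      have hene : c + d * s⁻¹ * s⁻¹ ≠ 0 := by
        intro h
        have hA0 : A = 0 := by
          ext i j
          rw [hAe i j, h, zero_mul, zero_mul]
          rfl
        rw [hA0, Matrix.rank_zero] at hrkA
        omega
      have hxd : x ⬝ᵥ Pi.single i0 (1:K) = x i0 := by simp
      refine ⟨((c + d * s⁻¹ * s⁻¹) * x i0)⁻¹ • (Pi.single i0 (1:K) : Fin n → K), ?_⟩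
      rw [Matrix.mulVecLin_apply, Matrix.mulVec_smul, aux_mulVec hAe, hxd, smul_smul,
        inv_mul_cancel₀ (mul_ne_zero hene hxi0), one_smul]
  intro y hy
  obtain ⟨u, rfl⟩ := hy
  rw [Matrix.mulVecLin_apply, aux_mulVec hBx u]
  exact Submodule.smul_mem _ _ hxmem
end

section
/- Let H be a normed abelian group and f : ℤ → H a map with f(1) = 0, and let Δ(x) = f(x+1) − f(x). Then f is a c-quasihomomorphism if and only if for all k ∈ ℤ_{≥0} and z ∈ ℤ: ‖Σ_{i=1}^{k} Δ(i) − Σ_{i=0}^{k} Δ(z−i)‖ ≤ c and ‖Σ_{i=0}^{k} Δ(−i) − Σ_{i=0}^{k−1} Δ(z−i)‖ ≤ c. -/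
/-- Reformulation of the `c`-quasihomomorphism condition in terms
of the delta map. -/
theorem stmt_7 {H : Type*} [AddCommGroup H] (norm : H → ℝ)
    (hnonneg : ∀ x, 0 ≤ norm x) (hzero : ∀ x, norm x = 0 ↔ x = 0)
    (htri : ∀ x y, norm (x + y) ≤ norm x + norm y)
    (hneg : ∀ x, norm (-x) = norm x)
    (f : ℤ → H) (hf1 : f 1 = 0) (c : ℝ)
    (Δ : ℤ → H) (hΔ : ∀ x : ℤ, Δ x = f (x + 1) - f x) :
    (∀ x y : ℤ, norm (f (x + y) - f x - f y) ≤ c) ↔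
      (∀ (k : ℕ) (z : ℤ),
        norm ((∑ i ∈ Finset.range k, Δ (i + 1)) -
          ∑ i ∈ Finset.range (k + 1), Δ (z - i)) ≤ c ∧
        norm ((∑ i ∈ Finset.range (k + 1), Δ (-(i : ℤ))) -
          ∑ i ∈ Finset.range k, Δ (z - i)) ≤ c) := by
  have hA : ∀ k : ℕ, (∑ i ∈ Finset.range k, Δ ((i : ℤ) + 1)) = f ((k : ℤ) + 1) := by
    intro k
    have h1 : (∑ i ∈ Finset.range k, Δ ((i : ℤ) + 1)) =
        ∑ i ∈ Finset.range k, ((fun n : ℕ => f ((n : ℤ) + 1)) (i + 1)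
          - (fun n : ℕ => f ((n : ℤ) + 1)) i) := by
      refine Finset.sum_congr rfl fun i _ => ?_
      simp only [hΔ]
      push_cast
      ring_nf
    rw [h1, Finset.sum_range_sub (fun n : ℕ => f ((n : ℤ) + 1)) k]
    simp [hf1]
  have hB : ∀ (n : ℕ) (z : ℤ), (∑ i ∈ Finset.range n, Δ (z - (i : ℤ))) =
      f (z + 1) - f (z - (n : ℤ) + 1) := by
    intro n z
    have h1 : (∑ i ∈ Finset.range n, Δ (z - (i : ℤ))) =
        ∑ i ∈ Finset.range n, ((fun m : ℕ => -f (z - (m : ℤ) + 1)) (i + 1)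
          - (fun m : ℕ => -f (z - (m : ℤ) + 1)) i) := by
      refine Finset.sum_congr rfl fun i _ => ?_
      simp only [hΔ]
      push_cast
      have e1 : z - ((i : ℤ) + 1) + 1 = z - i := by ring
      rw [e1]
      abel
    rw [h1, Finset.sum_range_sub (fun m : ℕ => -f (z - (m : ℤ) + 1)) n]
    push_cast
    abel
  have hC : ∀ k : ℕ, (∑ i ∈ Finset.range (k + 1), Δ (-(i : ℤ))) = -f (-(k : ℤ)) := by
    intro k
    have h1 : (∑ i ∈ Finset.range (k + 1), Δ (-(i : ℤ))) =
        ∑ i ∈ Finset.range (k + 1), Δ ((0 : ℤ) - (i : ℤ)) := by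
      refine Finset.sum_congr rfl fun i _ => ?_
      norm_num
    rw [h1, hB]
    have e1 : (0 : ℤ) - ((k : ℕ) + 1 : ℕ) + 1 = -(k : ℤ) := by push_cast; ring
    rw [e1]
    simp [hf1]
  constructor
  · intro h k z
    refine ⟨?_, ?_⟩
    · rw [hA, hB]
      have e1 : z - ((k : ℕ) + 1 : ℕ) + 1 = z - (k : ℤ) := by push_cast; ring
      rw [e1]
      have e2 : ((k : ℤ) + 1) + (z - (k : ℤ)) = z + 1 := by ring
      have h2 := h ((k : ℤ) + 1) (z - (k : ℤ))
      rw [e2] at h2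
      have e3 : f ((k : ℤ) + 1) - (f (z + 1) - f (z - (k : ℤ)))
          = -(f (z + 1) - f ((k : ℤ) + 1) - f (z - (k : ℤ))) := by abel
      rw [e3, hneg]
      exact h2
    · rw [hC, hB]
      have e1 : -(k : ℤ) + (z + 1) = z - (k : ℤ) + 1 := by ring
      have h2 := h (-(k : ℤ)) (z + 1)
      rw [e1] at h2
      have e3 : -f (-(k : ℤ)) - (f (z + 1) - f (z - (k : ℤ) + 1))
          = f (z - (k : ℤ) + 1) - f (-(k : ℤ)) - f (z + 1) := by abel
      rw [e3]
      exact h2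
  · intro h x y
    rcases le_or_gt x 0 with hx | hx
    · set k := (-x).toNat with hk
      have hkx : (k : ℤ) = -x := Int.toNat_of_nonneg (by omega)
      have h2 := (h k (y - 1)).2
      rw [hC, hB, hkx] at h2
      have e1 : y - 1 + 1 = y := by ring
      have e2 : y - 1 - -x + 1 = x + y := by ring
      rw [e1, e2, neg_neg] at h2
      have e3 : -f x - (f y - f (x + y)) = f (x + y) - f x - f y := by abel
      rw [e3] at h2
      exact h2
    · set k := (x - 1).toNat with hk
      have hkx : (k : ℤ) = x - 1 := Int.toNat_of_nonneg (by omega)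
      have h2 := (h k (x + y - 1)).1
      rw [hA, hB, hkx] at h2
      have e1 : x - 1 + 1 = x := by ring
      have e2 : x + y - 1 + 1 = x + y := by ring
      have e3 : x + y - 1 - ((k : ℕ) + 1 : ℕ) + 1 = y := by push_cast; rw [hkx]; ring
      rw [e1, e2, e3] at h2
      have e4 : f x - (f (x + y) - f y) = -(f (x + y) - f x - f y) := by abel
      rw [e4, hneg] at h2
      exact h2
end

section
/- Let f : ℤ → Sym(n×n, K) be a 1-quasihomomorphism (char K = 0) with f(1) = 0, Δ its delta map, Lᵢ = im(Δ(i)). If dim(Σ_{i∈ℤ} Lᵢ) ≥ 3, then Δ(0) + Δ(−1) = 0. -/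
open Matrix Module

-- range of sum is inside sup of ranges
lemma aux_range_add_le {K : Type*} [Field K] {n : ℕ} (A B : Matrix (Fin n) (Fin n) K) :
    LinearMap.range (A + B).mulVecLin ≤
      LinearMap.range A.mulVecLin ⊔ LinearMap.range B.mulVecLin := by
  rintro y ⟨x, rfl⟩
  rw [Matrix.mulVecLin_apply, Matrix.add_mulVec]
  exact Submodule.add_mem_sup ⟨x, rfl⟩ ⟨x, rfl⟩

lemma aux_rank_add {K : Type*} [Field K] {n : ℕ} (A B : Matrix (Fin n) (Fin n) K) :
    (A + B).rank ≤ A.rank + B.rank := by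
  have h := aux_range_add_le A B
  have h2 := Submodule.finrank_sup_add_finrank_inf_eq
    (LinearMap.range A.mulVecLin) (LinearMap.range B.mulVecLin)
  have h3 : finrank K ↥(LinearMap.range (A + B).mulVecLin) ≤
      finrank K ↥(LinearMap.range A.mulVecLin ⊔ LinearMap.range B.mulVecLin) :=
    Submodule.finrank_mono h
  unfold Matrix.rank
  omega

lemma aux_vecMulVec_mulVec {K : Type*} [Field K] {n : ℕ} (w v x : Fin n → K) :
    (vecMulVec w v) *ᵥ x = (v ⬝ᵥ x) • w := by
  ext i
  simp [vecMulVec_apply, mulVec, dotProduct, Finset.mul_sum, mul_comm, mul_left_comm]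

lemma aux_dot {K : Type*} [Field K] {n : ℕ} {u w : Fin n → K}
    (hu : u ≠ 0) (h : ∀ x, u ⬝ᵥ x = 0 → w ⬝ᵥ x = 0) : ∃ c : K, w = c • u := by
  obtain ⟨i₀, hi₀⟩ : ∃ i, u i ≠ 0 := by
    by_contra hc; push_neg at hc; exact hu (funext fun i => hc i)
  set x₀ : Fin n → K := (u i₀)⁻¹ • (Pi.single i₀ 1 : Fin n → K) with hx₀
  have hux₀ : u ⬝ᵥ x₀ = 1 := by
    simp [hx₀, dotProduct_smul, inv_mul_cancel₀ hi₀]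
  refine ⟨w ⬝ᵥ x₀, funext fun i => ?_⟩
  have hkey : u ⬝ᵥ (Pi.single i 1 - (u i) • x₀) = 0 := by
    simp [dotProduct_sub, dotProduct_smul, hux₀]
  have := h _ hkey
  rw [dotProduct_sub, dotProduct_smul, sub_eq_zero] at this
  simp only [dotProduct_single, mul_one] at this
  simp [this, Pi.smul_apply, smul_eq_mul, mul_comm]

lemma aux_sym_factor {K : Type*} [Field K] {n : ℕ} {M : Matrix (Fin n) (Fin n) K}
    (hsym : M.IsSymm) (hrank : M.rank ≤ 1) (hM : M ≠ 0) :
    ∃ (t : K) (c : Fin n → K), t ≠ 0 ∧ c ≠ 0 ∧ M = t • vecMulVec c c := by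
  obtain ⟨i₀, j₀, hij⟩ : ∃ i j, M i j ≠ 0 := by
    by_contra hc; push_neg at hc
    exact hM (by ext i j; simpa using hc i j)
  set c : Fin n → K := fun i => M i j₀ with hc
  have hc0 : c ≠ 0 := fun h => hij (by simpa [hc] using congrFun h i₀)
  have hcmem : c ∈ LinearMap.range M.mulVecLin := by
    refine ⟨Pi.single j₀ 1, ?_⟩
    simp [Matrix.mulVecLin_apply, hc]; rfl
  have hspan : Submodule.span K {c} = LinearMap.range M.mulVecLin := by
    apply Submodule.eq_of_le_of_finrank_le
    · rwa [Submodule.span_singleton_le_iff_mem]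
    · rw [finrank_span_singleton hc0]
      exact hrank
  have hcol : ∀ j, ∃ a : K, (fun i => M i j) = a • c := by
    intro j
    have : (fun i => M i j) ∈ LinearMap.range M.mulVecLin := by
      refine ⟨Pi.single j 1, ?_⟩
      simp [Matrix.mulVecLin_apply]; rfl
    rw [← hspan, Submodule.mem_span_singleton] at this
    obtain ⟨a, ha⟩ := this
    exact ⟨a, ha.symm⟩
  choose v hv using hcol
  have hMentry : ∀ i j, M i j = v j * c i := fun i j => by
    have := congrFun (hv j) i; simpa using this
  have hci₀ : c i₀ ≠ 0 := by
    -- c i₀ = M i₀ j₀ ≠ 0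
    simpa [hc] using hij
  set t : K := v i₀ / c i₀ with ht
  have hvj : ∀ j, v j = t * c j := by
    intro j
    have h1 : M i₀ j = v j * c i₀ := hMentry i₀ j
    have h2 : M j i₀ = v i₀ * c j := hMentry j i₀
    have hs : M i₀ j = M j i₀ := by
      have := hsym.apply i₀ j  -- check direction
      exact this.symm
    field_simp [ht]
    rw [h1, h2] at hs
    linear_combination (c i₀)⁻¹ * hs - v j * mul_inv_cancel₀ hci₀
  have hMeq : M = t • vecMulVec c c := by
    ext i j
    rw [hMentry i j, hvj j]
    simp [vecMulVec_apply]; ring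
  refine ⟨t, c, ?_, hc0, hMeq⟩
  intro ht0
  apply hM
  rw [hMeq, ht0, zero_smul]

lemma aux_key {K : Type*} [Field K] {n : ℕ} {S g : Matrix (Fin n) (Fin n) K}
    (hSsym : S.IsSymm) (hgsym : g.IsSymm) (hS : S ≠ 0) (hSrank : S.rank ≤ 2)
    (hgrank : g.rank ≤ 1) (hdiff : (S - g).rank ≤ 1) :
    LinearMap.range g.mulVecLin ≤ LinearMap.range S.mulVecLin := by
  by_cases hg : g = 0
  · simp [hg]
  by_cases h2 : S.rank ≤ 1
  · -- rank-one case
    obtain ⟨a, w, ha, hw, hSf⟩ := aux_sym_factor hSsym h2 hS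
    obtain ⟨b, u, hb, hu, hgf⟩ := aux_sym_factor hgsym hgrank hg
    by_cases hcu : ∃ c : K, u = c • w
    · obtain ⟨c, rfl⟩ := hcu
      rintro y ⟨x, rfl⟩
      refine ⟨(b * c * c * a⁻¹) • x, ?_⟩
      rw [Matrix.mulVecLin_apply, Matrix.mulVecLin_apply, Matrix.mulVec_smul, hSf, hgf]
      rw [Matrix.smul_mulVec, Matrix.smul_mulVec,
        aux_vecMulVec_mulVec, aux_vecMulVec_mulVec]
      rw [smul_dotProduct]
      ext i
      simp only [Pi.smul_apply, smul_eq_mul]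
      field_simp
    · exfalso
      have hwu : ¬ ∃ c : K, w = c • u := by
        rintro ⟨c, hcw⟩
        have hc0 : c ≠ 0 := by rintro rfl; simp at hcw; exact hw hcw
        exact hcu ⟨c⁻¹, by rw [hcw, smul_smul, inv_mul_cancel₀ hc0, one_smul]⟩
      -- get x with w ⬝ᵥ x = 0, u ⬝ᵥ x ≠ 0
      have hx : ∃ x, w ⬝ᵥ x = 0 ∧ u ⬝ᵥ x ≠ 0 := by
        by_contra hcc; push_neg at hcc
        exact hcu (aux_dot hw fun x hx => by
          by_contra h0; exact h0 (hcc x hx))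
      have hy : ∃ y, u ⬝ᵥ y = 0 ∧ w ⬝ᵥ y ≠ 0 := by
        by_contra hcc; push_neg at hcc
        exact hwu (aux_dot hu fun x hx => by
          by_contra h0; exact h0 (hcc x hx))
      obtain ⟨x, hwx, hux⟩ := hx
      obtain ⟨y, huy, hwy⟩ := hy
      set p : Fin n → K := (S - g) *ᵥ x with hp
      set q : Fin n → K := (S - g) *ᵥ y with hq
      have hpval : p = (-(b * (u ⬝ᵥ x))) • u := by
        rw [hp, Matrix.sub_mulVec, hSf, hgf, Matrix.smul_mulVec,
          Matrix.smul_mulVec, aux_vecMulVec_mulVec, aux_vecMulVec_mulVec,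
          hwx]
        ext i; simp [mul_comm]; ring
      have hqval : q = (a * (w ⬝ᵥ y)) • w := by
        rw [hq, Matrix.sub_mulVec, hSf, hgf, Matrix.smul_mulVec,
          Matrix.smul_mulVec, aux_vecMulVec_mulVec, aux_vecMulVec_mulVec,
          huy]
        ext i; simp [mul_comm]; ring
      have hsp : (-(b * (u ⬝ᵥ x))) ≠ 0 := by
        simp only [neg_ne_zero]; exact mul_ne_zero hb hux
      have hsq : (a * (w ⬝ᵥ y)) ≠ 0 := mul_ne_zero ha hwy
      have hp0 : p ≠ 0 := by rw [hpval]; exact smul_ne_zero hsp hu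
      have hli : LinearIndependent K ![p, q] := by
        rw [LinearIndependent.pair_iff' hp0]
        intro d hd
        apply hwu
        rw [hpval, hqval, smul_smul] at hd
        refine ⟨(a * (w ⬝ᵥ y))⁻¹ * (d * -(b * (u ⬝ᵥ x))), ?_⟩
        rw [mul_smul, hd, inv_smul_smul₀ hsq]
      have hle : Submodule.span K (Set.range ![p, q]) ≤
          LinearMap.range (S - g).mulVecLin := by
        rw [Submodule.span_le]
        rintro z ⟨i, rfl⟩
        fin_cases i
        · exact ⟨x, rfl⟩
        · exact ⟨y, rfl⟩
      have h2le : 2 ≤ (S - g).rank := by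
        have := finrank_span_eq_card hli
        have hmono := Submodule.finrank_mono hle
        rw [this] at hmono
        simpa [Matrix.rank] using hmono
      omega
  · -- rank-two case
    push_neg at h2
    have hS2 : S.rank = 2 := le_antisymm hSrank h2
    set W := LinearMap.range g.mulVecLin ⊔ LinearMap.range (S - g).mulVecLin with hW
    have hle : LinearMap.range S.mulVecLin ≤ W := by
      rintro y ⟨x, rfl⟩
      rw [Matrix.mulVecLin_apply]
      have : S *ᵥ x = g *ᵥ x + (S - g) *ᵥ x := by
        rw [Matrix.sub_mulVec]; abel
      rw [this]
      exact Submodule.add_mem_sup ⟨x, rfl⟩ ⟨x, rfl⟩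
    have hWfin : finrank K ↥W ≤ 2 := by
      have heq := Submodule.finrank_sup_add_finrank_inf_eq
        (LinearMap.range g.mulVecLin) (LinearMap.range (S - g).mulVecLin)
      have : finrank K ↥(LinearMap.range g.mulVecLin) +
          finrank K ↥(LinearMap.range (S - g).mulVecLin) ≤ 2 := by
        have h1 : finrank K ↥(LinearMap.range g.mulVecLin) ≤ 1 := hgrank
        have h2 : finrank K ↥(LinearMap.range (S - g).mulVecLin) ≤ 1 := hdiff
        omega
      rw [hW]
      omega
    have heq : LinearMap.range S.mulVecLin = W := by
      apply Submodule.eq_of_le_of_finrank_le hle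
      rw [show finrank K ↥(LinearMap.range S.mulVecLin) = S.rank from rfl, hS2]
      exact hWfin
    rw [heq]
    exact le_sup_left

/-- For a 1-quasihomomorphism `f : ℤ → Sym(n×n, K)` (char K = 0)
with `f 1 = 0`, if the sum of all the spaces `Lᵢ = im (Δ i)` has dimension at
least 3, then `Δ 0 + Δ (-1) = 0`. -/
theorem stmt_9 {K : Type*} [Field K] [CharZero K] {n : ℕ}
    (f : ℤ → Matrix (Fin n) (Fin n) K)
    (hsym : ∀ x, (f x).IsSymm) (hf1 : f 1 = 0)
    (hquasi : ∀ x y : ℤ, (f (x + y) - f x - f y).rank ≤ 1)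
    (Δ : ℤ → Matrix (Fin n) (Fin n) K) (hΔ : ∀ x : ℤ, Δ x = f (x + 1) - f x)
    (L : ℤ → Submodule K (Fin n → K))
    (hL : ∀ i : ℤ, L i = LinearMap.range (Δ i).mulVecLin)
    (hdim : 3 ≤ Module.finrank K ↥(⨆ i : ℤ, L i)) :
    Δ 0 + Δ (-1) = 0 := by
  by_contra hS0
  set S : Matrix (Fin n) (Fin n) K := Δ 0 + Δ (-1) with hSdef
  have hΔsym : ∀ k : ℤ, (Δ k).IsSymm := fun k => by
    rw [hΔ]; exact (hsym _).sub (hsym _)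
  have hSsym : S.IsSymm := (hΔsym 0).add (hΔsym (-1))
  have hΔrank : ∀ k : ℤ, (Δ k).rank ≤ 1 := by
    intro k
    have h := hquasi k 1
    rw [hf1, sub_zero] at h
    rw [hΔ]; exact h
  have e1 : (0 : ℤ) + 1 = 1 := by norm_num
  have e2 : (-1 : ℤ) + 1 = 0 := by norm_num
  have hSf : S = - f (-1) := by
    rw [hSdef, hΔ, hΔ, e1, e2, hf1]
    abel
  have hdiff : ∀ k : ℤ, (S - Δ k).rank ≤ 1 := by
    intro k
    have h := hquasi (-1) (k + 1)
    have e : (-1 : ℤ) + (k + 1) = k := by ring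
    rw [e] at h
    have hexp : S - Δ k = f k - f (-1) - f (k + 1) := by
      rw [hSf, hΔ]; abel
    rw [hexp]; exact h
  have hSrank : S.rank ≤ 2 := by
    have hre : (S - Δ 0) + Δ 0 = S := by abel
    calc S.rank = ((S - Δ 0) + Δ 0).rank := by rw [hre]
      _ ≤ (S - Δ 0).rank + (Δ 0).rank := aux_rank_add _ _
      _ ≤ 2 := by
          have h1 := hdiff 0
          have h2 := hΔrank 0
          omega
  have hkey : ∀ k : ℤ, L k ≤ LinearMap.range S.mulVecLin := by
    intro k
    rw [hL]
    exact aux_key hSsym (hΔsym k) hS0 hSrank (hΔrank k) (hdiff k)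
  have hsup : (⨆ i : ℤ, L i) ≤ LinearMap.range S.mulVecLin := iSup_le hkey
  have hm : finrank K ↥(⨆ i : ℤ, L i) ≤ finrank K ↥(LinearMap.range S.mulVecLin) :=
    Submodule.finrank_mono hsup
  have hfin : finrank K ↥(LinearMap.range S.mulVecLin) = S.rank := rfl
  omega
end

section
/- Let p > q ≥ 2 be integers with g = gcd(p,q), and let ∼ be the equivalence relation on ℤ generated by: x ∼ y if x ≡ y mod q; x ∼ q−1−x for x ∈ {0,...,q−1}; and x ∼ p−1−x for x ∈ {0,...,p−1}. Then x ∼ y if and only if x ≡ y mod g or x + y ≡ −1 mod g. -/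
/-- For `p > q ≥ 2` with `g = gcd(p, q)`, the equivalence
relation on `ℤ` generated by `q`-periodicity, `q`-palindromicity and
`p`-palindromicity relates `x` and `y` iff `x ≡ y mod g` or
`x + y ≡ -1 mod g`. -/
theorem stmt_11 (p q : ℤ) (hq : 2 ≤ q) (hpq : q < p) :
    ∀ x y : ℤ,
      Relation.EqvGen (fun x y : ℤ =>
        (x ≡ y [ZMOD q]) ∨
        (0 ≤ x ∧ x ≤ q - 1 ∧ y = q - 1 - x) ∨
        (0 ≤ x ∧ x ≤ p - 1 ∧ y = p - 1 - x)) x y ↔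
      (x ≡ y [ZMOD (Int.gcd p q : ℤ)]) ∨ (x + y ≡ -1 [ZMOD (Int.gcd p q : ℤ)]) := by
  set g : ℤ := (Int.gcd p q : ℤ) with hgdef
  set r : ℤ → ℤ → Prop := fun x y =>
        (x ≡ y [ZMOD q]) ∨
        (0 ≤ x ∧ x ≤ q - 1 ∧ y = q - 1 - x) ∨
        (0 ≤ x ∧ x ≤ p - 1 ∧ y = p - 1 - x) with hrdef
  have hq0 : (0:ℤ) < q := by omega
  have hgq : g ∣ q := Int.gcd_dvd_right p q
  have hgp : g ∣ p := Int.gcd_dvd_left p q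
  -- A : mod-q congruent elements are related
  have A : ∀ x y : ℤ, x ≡ y [ZMOD q] → Relation.EqvGen r x y := by
    intro x y h
    exact Relation.EqvGen.rel x y (Or.inl h)
  -- B : x ∼ q - 1 - x for all x
  have B : ∀ x : ℤ, Relation.EqvGen r x (q - 1 - x) := by
    intro x
    have hmod : (x % q) ≡ x [ZMOD q] := Int.emod_emod_of_dvd x dvd_rfl
    have h0 : 0 ≤ x % q := Int.emod_nonneg x (by omega)
    have h1 : x % q ≤ q - 1 := by have := Int.emod_lt_of_pos x hq0; omega
    have e1 : Relation.EqvGen r x (x % q) := A _ _ hmod.symm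
    have e2 : Relation.EqvGen r (x % q) (q - 1 - x % q) :=
      Relation.EqvGen.rel _ _ (Or.inr (Or.inl ⟨h0, h1, rfl⟩))
    have e3 : Relation.EqvGen r (q - 1 - x % q) (q - 1 - x) :=
      A _ _ ((Int.ModEq.refl (q - 1)).sub hmod)
    exact Relation.EqvGen.trans _ _ _ (Relation.EqvGen.trans _ _ _ e1 e2) e3
  -- C : x ∼ p - 1 - x for all x
  have C : ∀ x : ℤ, Relation.EqvGen r x (p - 1 - x) := by
    intro x
    have hmod : (x % q) ≡ x [ZMOD q] := Int.emod_emod_of_dvd x dvd_rfl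
    have h0 : 0 ≤ x % q := Int.emod_nonneg x (by omega)
    have h1 : x % q ≤ p - 1 := by have := Int.emod_lt_of_pos x hq0; omega
    have e1 : Relation.EqvGen r x (x % q) := A _ _ hmod.symm
    have e2 : Relation.EqvGen r (x % q) (p - 1 - x % q) :=
      Relation.EqvGen.rel _ _ (Or.inr (Or.inr ⟨h0, h1, rfl⟩))
    have e3 : Relation.EqvGen r (p - 1 - x % q) (p - 1 - x) :=
      A _ _ ((Int.ModEq.refl (p - 1)).sub hmod)
    exact Relation.EqvGen.trans _ _ _ (Relation.EqvGen.trans _ _ _ e1 e2) e3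
  -- D : x ∼ x + (p - q)
  have D : ∀ x : ℤ, Relation.EqvGen r x (x + (p - q)) := by
    intro x
    have e1 := B x
    have e2 := C (q - 1 - x)
    have e : p - 1 - (q - 1 - x) = x + (p - q) := by ring
    rw [e] at e2
    exact Relation.EqvGen.trans _ _ _ e1 e2
  -- Eq : x ∼ x + q
  have Eq1 : ∀ x : ℤ, Relation.EqvGen r x (x + q) := by
    intro x
    exact A _ _ (Int.modEq_iff_dvd.mpr ⟨1, by ring⟩)
  -- shift lemma
  have shift : ∀ c : ℤ, (∀ x, Relation.EqvGen r x (x + c)) →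
      ∀ x m : ℤ, Relation.EqvGen r x (x + c * m) := by
    intro c hc x m
    induction m using Int.induction_on with
    | zero => simpa using Relation.EqvGen.refl x
    | succ n ih =>
        have h1 := hc (x + c * n)
        have e : x + c * n + c = x + c * ((n : ℤ) + 1) := by ring
        rw [e] at h1
        exact Relation.EqvGen.trans _ _ _ ih h1
    | pred n ih =>
        have h1 := hc (x + c * (-(n : ℤ) - 1))
        have e : x + c * (-(n : ℤ) - 1) + c = x + c * (-(n : ℤ)) := by ring
        rw [e] at h1
        exact Relation.EqvGen.trans _ _ _ ih (Relation.EqvGen.symm _ _ h1)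
  -- MG : mod-g congruent elements are related
  have MG : ∀ x y : ℤ, x ≡ y [ZMOD g] → Relation.EqvGen r x y := by
    intro x y h
    obtain ⟨k, hk⟩ := Int.modEq_iff_dvd.mp h
    set u := Int.gcdA p q with hu
    set v := Int.gcdB p q with hv
    have hbez : g = p * u + q * v := Int.gcd_eq_gcd_ab p q
    have h1 := shift (p - q) D x (u * k)
    have h2 := shift q Eq1 (x + (p - q) * (u * k)) ((u + v) * k)
    have e : x + (p - q) * (u * k) + q * ((u + v) * k) = y := by
      have hy : y = x + g * k := by linarith
      rw [hy, hbez]; ring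
    rw [e] at h2
    exact Relation.EqvGen.trans _ _ _ h1 h2
  -- F : x ∼ -1 - x
  have F : ∀ x : ℤ, Relation.EqvGen r x (-1 - x) := by
    intro x
    refine Relation.EqvGen.trans _ _ _ (B x) (A _ _ ?_)
    exact Int.modEq_iff_dvd.mpr ⟨-1, by ring⟩
  intro x y
  constructor
  · intro h
    induction h with
    | rel a b hab =>
        rcases hab with h | ⟨_, _, h⟩ | ⟨_, _, h⟩
        · exact Or.inl (h.of_dvd hgq)
        · right
          subst h
          obtain ⟨c, hc⟩ := hgq
          exact Int.modEq_iff_dvd.mpr ⟨-c, by linarith⟩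
        · right
          subst h
          obtain ⟨c, hc⟩ := hgp
          exact Int.modEq_iff_dvd.mpr ⟨-c, by linarith⟩
    | refl a => exact Or.inl (Int.ModEq.refl a)
    | symm a b _ ih =>
        rcases ih with h | h
        · exact Or.inl h.symm
        · right
          have e : b + a = a + b := by ring
          rw [e]; exact h
    | trans a b c _ _ ih1 ih2 =>
        rcases ih1 with h1 | h1 <;> rcases ih2 with h2 | h2
        · exact Or.inl (h1.trans h2)
        · right
          obtain ⟨k1, e1⟩ := Int.modEq_iff_dvd.mp h1
          obtain ⟨k2, e2⟩ := Int.modEq_iff_dvd.mp h2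
          exact Int.modEq_iff_dvd.mpr ⟨k1 + k2, by linarith⟩
        · right
          obtain ⟨k1, e1⟩ := Int.modEq_iff_dvd.mp h1
          obtain ⟨k2, e2⟩ := Int.modEq_iff_dvd.mp h2
          exact Int.modEq_iff_dvd.mpr ⟨k1 - k2, by linarith⟩
        · left
          obtain ⟨k1, e1⟩ := Int.modEq_iff_dvd.mp h1
          obtain ⟨k2, e2⟩ := Int.modEq_iff_dvd.mp h2
          exact Int.modEq_iff_dvd.mpr ⟨k1 - k2, by linarith⟩
  · intro h
    rcases h with h | h
    · exact MG x y h
    · refine Relation.EqvGen.trans _ _ _ (F x) (MG _ _ ?_)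
      obtain ⟨k, hk⟩ := Int.modEq_iff_dvd.mp h
      exact Int.modEq_iff_dvd.mpr ⟨-k, by linarith⟩
end

section
/- Let p > q ≥ 2 be integers with g = gcd(p,q), and let ∼ be the equivalence relation on ℤ generated by: x ∼ y if x ≡ y mod q; x ∼ q−1−x for x ∈ {0,...,q−1}; and x ∼ p−1−x for x ∈ {0,...,p−1}. Then ∼ is p-periodic: x ∼ x − p for all x ∈ ℤ. -/
/-- For `p > q ≥ 2`, the equivalence relation on `ℤ` generated
by `q`-periodicity, `q`-palindromicity and `p`-palindromicity is `p`-periodic: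
`x ∼ x - p` for all `x`. -/
theorem stmt_12 (p q : ℤ) (hq : 2 ≤ q) (hpq : q < p) :
    ∀ x : ℤ,
      Relation.EqvGen (fun x y : ℤ =>
        (x ≡ y [ZMOD q]) ∨
        (0 ≤ x ∧ x ≤ q - 1 ∧ y = q - 1 - x) ∨
        (0 ≤ x ∧ x ≤ p - 1 ∧ y = p - 1 - x)) x (x - p) := by
  intro x
  set R := fun x y : ℤ =>
        (x ≡ y [ZMOD q]) ∨
        (0 ≤ x ∧ x ≤ q - 1 ∧ y = q - 1 - x) ∨
        (0 ≤ x ∧ x ≤ p - 1 ∧ y = p - 1 - x) with hR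
  set s := (x - p) % q with hs
  have hs0 : 0 ≤ s := Int.emod_nonneg _ (by omega)
  have hs1 : s < q := Int.emod_lt_of_pos _ (by omega)
  have hmod : (x - p) ≡ s [ZMOD q] := by
    refine Int.modEq_iff_dvd.mpr ⟨-((x - p) / q), ?_⟩
    have := Int.mul_ediv_add_emod (x - p) q
    linarith
  have h1 : x ≡ p - q + s [ZMOD q] := by
    have h2 : x ≡ s + p [ZMOD q] := by
      have := hmod.add_right p
      simpa using this
    have h3 : (s + p : ℤ) ≡ p - q + s [ZMOD q] :=
      Int.modEq_iff_dvd.mpr ⟨-1, by ring⟩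
    exact h2.trans h3
  have r1 : R x (p - q + s) := Or.inl h1
  have r2 : R (q - 1 - s) (p - q + s) := Or.inr (Or.inr ⟨by omega, by omega, by ring⟩)
  have r3 : R s (q - 1 - s) := Or.inr (Or.inl ⟨hs0, by omega, by ring⟩)
  have r4 : R s (x - p) := Or.inl hmod.symm
  exact Relation.EqvGen.trans _ _ _ (Relation.EqvGen.rel _ _ r1)
    (Relation.EqvGen.trans _ _ _ (Relation.EqvGen.symm _ _ (Relation.EqvGen.rel _ _ r2))
      (Relation.EqvGen.trans _ _ _ (Relation.EqvGen.symm _ _ (Relation.EqvGen.rel _ _ r3))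
        (Relation.EqvGen.rel _ _ r4)))
end

section
/- Let f : ℤ → Sym(n×n, K) be a 1-quasihomomorphism with f(1) = 0, char K = 0, Δ its delta map, Lᵢ = im(Δ(i)), and Vₘ = L_{−m−1} + ... + L_{−2} + L₁ + ... + Lₘ. If V_m ⊋ V_{m−1}, then for all i ∈ {1,...,m−1}: Δ(i) = Δ(m−i) = Δ(−i−1) = Δ(i−m−1). -/
open Matrix Submodule LinearMap Module

section QhAux

variable {K : Type*} [Field K] {n : ℕ}

private lemma qh_range_neg (A : Matrix (Fin n) (Fin n) K) :
    LinearMap.range (-A).mulVecLin = LinearMap.range A.mulVecLin := by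
  ext y; constructor
  · rintro ⟨x, rfl⟩; exact ⟨-x, by simp [mulVecLin_apply, neg_mulVec, mulVec_neg]⟩
  · rintro ⟨x, rfl⟩; exact ⟨-x, by simp [mulVecLin_apply, neg_mulVec, mulVec_neg]⟩

private lemma qh_rank_neg (A : Matrix (Fin n) (Fin n) K) : (-A).rank = A.rank := by
  unfold Matrix.rank; rw [qh_range_neg]

private lemma qh_isSymm_sub {A B : Matrix (Fin n) (Fin n) K} (hA : A.IsSymm) (hB : B.IsSymm) :
    (A - B).IsSymm := by
  unfold Matrix.IsSymm at *; rw [transpose_sub, hA, hB]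

private lemma qh_isSymm_neg {A : Matrix (Fin n) (Fin n) K} (hA : A.IsSymm) : (-A).IsSymm := by
  unfold Matrix.IsSymm at *; rw [transpose_neg, hA]

private lemma qh_isSymm_add {A B : Matrix (Fin n) (Fin n) K} (hA : A.IsSymm) (hB : B.IsSymm) :
    (A + B).IsSymm := by
  unfold Matrix.IsSymm at *; rw [transpose_add, hA, hB]

private lemma qh_dot_eq {F : Module.Dual K (Fin n → K)} (w : Fin n → K) :
    w ⬝ᵥ (fun j => F (Pi.single j (1 : K))) = F w := by
  have hw : w = ∑ j, w j • (Pi.single j (1 : K) : Fin n → K) := by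
    ext i; simp [Pi.single_apply]
  rw [dotProduct]
  conv_rhs => rw [hw, map_sum]
  congr 1; ext j; simp

private lemma qh_exists_dot {v s : Fin n → K} (h : v ∉ Submodule.span K {s}) :
    ∃ x : Fin n → K, v ⬝ᵥ x = 1 ∧ s ⬝ᵥ x = 0 := by
  set p := Submodule.span K {s}
  have hv : p.mkQ v ≠ 0 := by
    simpa [Submodule.Quotient.mk_eq_zero] using h
  obtain ⟨φ, hφ⟩ : ∃ φ : Module.Dual K ((Fin n → K) ⧸ p), φ (p.mkQ v) ≠ 0 := by
    by_contra hc
    push_neg at hc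
    exact hv ((Module.forall_dual_apply_eq_zero_iff K _).mp hc)
  set F : Module.Dual K (Fin n → K) := φ.comp p.mkQ with hF
  have hFv : F v ≠ 0 := hφ
  have hFs : F s = 0 := by
    have hzero : p.mkQ s = 0 := by
      rw [Submodule.mkQ_apply, Submodule.Quotient.mk_eq_zero]
      exact Submodule.mem_span_singleton_self s
    simp only [hF, LinearMap.comp_apply, hzero, map_zero]
  refine ⟨(F v)⁻¹ • (fun j => F (Pi.single j (1 : K))), ?_, ?_⟩
  · rw [dotProduct_smul, qh_dot_eq]
    simp [inv_mul_cancel₀ hFv]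
  · rw [dotProduct_smul, qh_dot_eq, hFs, smul_zero]

private lemma qh_mulVec_smul_vvt (t : K) (v x : Fin n → K) :
    (t • vecMulVec v v) *ᵥ x = (t * (v ⬝ᵥ x)) • v := by
  ext i
  simp only [mulVec, dotProduct, Pi.smul_apply, smul_eq_mul, vecMulVec_apply,
    Matrix.smul_apply, Finset.mul_sum, Finset.sum_mul]
  congr 1; ext j; ring

private lemma qh_range_smul_vvt {t : K} {v : Fin n → K} (ht : t ≠ 0) (hv : v ≠ 0) :
    LinearMap.range ((t • vecMulVec v v).mulVecLin) = Submodule.span K {v} := by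
  apply le_antisymm
  · rintro y ⟨x, rfl⟩
    rw [mulVecLin_apply, qh_mulVec_smul_vvt]
    exact Submodule.smul_mem _ _ (Submodule.mem_span_singleton_self v)
  · rw [Submodule.span_singleton_le_iff_mem]
    obtain ⟨j, hj⟩ : ∃ j, v j ≠ 0 := by
      by_contra hc; push_neg at hc; exact hv (funext hc)
    refine ⟨(t * v j)⁻¹ • (Pi.single j (1:K) : Fin n → K), ?_⟩
    rw [mulVecLin_apply, qh_mulVec_smul_vvt]
    have : v ⬝ᵥ ((t * v j)⁻¹ • (Pi.single j (1:K) : Fin n → K)) = (t * v j)⁻¹ * v j := by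
      rw [dotProduct_smul]
      simp [dotProduct_single]
    rw [this]
    have : t * ((t * v j)⁻¹ * v j) = 1 := by field_simp
    rw [this, one_smul]

/-- Structure of symmetric matrices of rank at most one. -/
private lemma qh_symm_rank_one {M : Matrix (Fin n) (Fin n) K} (hs : M.IsSymm) (h1 : M.rank ≤ 1) :
    M = 0 ∨ ∃ (t : K) (v : Fin n → K), t ≠ 0 ∧ v ≠ 0 ∧ M = t • vecMulVec v v := by
  by_cases hM : M = 0
  · exact Or.inl hM
  right
  have hcol : ∃ j, (fun i => M i j) ≠ 0 := by
    by_contra hc; push_neg at hc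
    apply hM; ext i j
    have := congrFun (hc j) i
    simpa using this
  obtain ⟨j₀, hj₀⟩ := hcol
  set v : Fin n → K := fun i => M i j₀ with hvdef
  have hv : v ≠ 0 := hj₀
  have hvmem : v ∈ LinearMap.range M.mulVecLin := by
    refine ⟨Pi.single j₀ 1, ?_⟩
    rw [mulVecLin_apply]
    ext i; simp [mulVec, dotProduct_single, hvdef]
  have hspan : Submodule.span K {v} = LinearMap.range M.mulVecLin := by
    apply Submodule.eq_of_le_of_finrank_le
    · rw [Submodule.span_singleton_le_iff_mem]; exact hvmem
    · calc finrank K (LinearMap.range M.mulVecLin) = M.rank := rfl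
        _ ≤ 1 := h1
        _ = finrank K (Submodule.span K {v}) := (finrank_span_singleton hv).symm
  have hcols : ∀ j, ∃ c : K, (fun i => M i j) = c • v := by
    intro j
    have : (fun i => M i j) ∈ LinearMap.range M.mulVecLin := by
      refine ⟨Pi.single j 1, ?_⟩
      rw [mulVecLin_apply]; ext i; simp [mulVec, dotProduct_single]
    rw [← hspan, Submodule.mem_span_singleton] at this
    obtain ⟨c, hc⟩ := this
    exact ⟨c, hc.symm⟩
  choose c hc using hcols
  have hMc : ∀ i j, M i j = c j * v i := by
    intro i j
    have := congrFun (hc j) i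
    simpa using this
  obtain ⟨i₀, hi₀⟩ : ∃ i, v i ≠ 0 := by
    by_contra hcon; push_neg at hcon; exact hv (funext hcon)
  set t : K := c i₀ / v i₀ with htdef
  have hct : ∀ j, c j = t * v j := by
    intro j
    have hsymm : M i₀ j = M j i₀ := by
      have := congrFun (congrFun hs j) i₀
      simpa [Matrix.transpose_apply] using this
    rw [hMc i₀ j, hMc j i₀] at hsymm
    rw [htdef, div_mul_eq_mul_div, eq_div_iff hi₀]
    rw [mul_comm (c j) (v i₀)] at hsymm
    linear_combination hsymm
  have hMt : M = t • vecMulVec v v := by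
    ext i j
    rw [hMc i j, hct j]
    simp [vecMulVec_apply]; ring
  have ht : t ≠ 0 := by
    intro h0; apply hM; rw [hMt, h0, zero_smul]
  exact ⟨t, v, ht, hv, hMt⟩

/-- The key projection lemma: if `C` is supported on `V`, `D` is a symmetric
matrix of rank at most one whose column space is not contained in `V`, and
`D + C` has rank at most one, then `C = 0`. -/
private lemma qh_keyP (V : Submodule K (Fin n → K)) {C D : Matrix (Fin n) (Fin n) K}
    (hCs : C.IsSymm) (hDs : D.IsSymm) (hD1 : D.rank ≤ 1)
    (hCV : LinearMap.range C.mulVecLin ≤ V)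
    (hDV : ¬ LinearMap.range D.mulVecLin ≤ V)
    (hA1 : (D + C).rank ≤ 1) : C = 0 := by
  rcases qh_symm_rank_one hDs hD1 with hD0 | ⟨lam, v, hlam, hv, hDeq⟩
  · exfalso; apply hDV; rw [hD0]; simp [mulVecLin_zero]
  have hrangeD : LinearMap.range D.mulVecLin = Submodule.span K {v} := by
    rw [hDeq]; exact qh_range_smul_vvt hlam hv
  have hvV : v ∉ V := by
    intro hmem; apply hDV; rw [hrangeD, Submodule.span_singleton_le_iff_mem]; exact hmem
  have hAs : (D + C).IsSymm := qh_isSymm_add hDs hCs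
  rcases qh_symm_rank_one hAs hA1 with hA0 | ⟨mu, s, hmu, hs, hAeq⟩
  · exfalso; apply hDV
    have hCD : C = -D := by
      have h := hA0
      have : D + C - D = 0 - D := by rw [h]
      simpa using this
    rw [← qh_range_neg, ← hCD]; exact hCV
  · have hCeq : C = mu • vecMulVec s s - lam • vecMulVec v v := by
      rw [← hAeq, ← hDeq]; abel
    by_cases hsv : s ∈ Submodule.span K {v}
    · obtain ⟨a, ha⟩ := Submodule.mem_span_singleton.mp hsv
      have hvvt : vecMulVec s s = (a * a) • vecMulVec v v := by
        ext i j; rw [← ha]; simp [vecMulVec_apply]; ring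
      have hC2 : C = (mu * (a * a) - lam) • vecMulVec v v := by
        rw [hCeq, hvvt, smul_smul, sub_smul]
      by_cases hco : mu * (a * a) - lam = 0
      · rw [hC2, hco, zero_smul]
      · exfalso; apply hvV
        have : LinearMap.range C.mulVecLin = Submodule.span K {v} := by
          rw [hC2]; exact qh_range_smul_vvt hco hv
        apply hCV
        rw [this]
        exact Submodule.mem_span_singleton_self v
    · have hvs : v ∉ Submodule.span K {s} := by
        intro hmem
        obtain ⟨b, hb⟩ := Submodule.mem_span_singleton.mp hmem
        have hb0 : b ≠ 0 := by rintro rfl; simp at hb; exact hv hb.symm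
        apply hsv
        rw [Submodule.mem_span_singleton]
        exact ⟨b⁻¹, by rw [← hb, smul_smul, inv_mul_cancel₀ hb0, one_smul]⟩
      obtain ⟨x, hvx, hsx⟩ := qh_exists_dot hvs
      exfalso; apply hvV
      have hCx : C *ᵥ x = (-lam) • v := by
        rw [hCeq, sub_mulVec, qh_mulVec_smul_vvt, qh_mulVec_smul_vvt, hsx, hvx]
        simp
      have hmem : (-lam) • v ∈ V := by
        rw [← hCx]; exact hCV ⟨x, rfl⟩
      have := Submodule.smul_mem V (-lam)⁻¹ hmem
      rwa [smul_smul, inv_mul_cancel₀ (neg_ne_zero.mpr hlam), one_smul] at this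

private lemma qh_Icc_insert_top {a b : ℤ} (h : a ≤ b) :
    Finset.Icc a b = insert b (Finset.Icc a (b - 1)) := by
  ext x; simp only [Finset.mem_Icc, Finset.mem_insert]; omega

private lemma qh_Icc_insert_bot {a b : ℤ} (h : a ≤ b) :
    Finset.Icc a b = insert a (Finset.Icc (a + 1) b) := by
  ext x; simp only [Finset.mem_Icc, Finset.mem_insert]; omega

private lemma qh_Wtop (Δ : ℤ → Matrix (Fin n) (Fin n) K) {a b : ℤ} (h : a ≤ b) :
    ∑ j ∈ Finset.Icc a b, Δ j = (∑ j ∈ Finset.Icc a (b - 1), Δ j) + Δ b := by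
  rw [qh_Icc_insert_top h, Finset.sum_insert (by simp only [Finset.mem_Icc]; omega)]
  exact add_comm _ _

private lemma qh_Wbot (Δ : ℤ → Matrix (Fin n) (Fin n) K) {a b : ℤ} (h : a ≤ b) :
    ∑ j ∈ Finset.Icc a b, Δ j = Δ a + (∑ j ∈ Finset.Icc (a + 1) b, Δ j) := by
  rw [qh_Icc_insert_bot h, Finset.sum_insert (by simp only [Finset.mem_Icc]; omega)]

private lemma qh_Wconcat (Δ : ℤ → Matrix (Fin n) (Fin n) K) {a b c : ℤ} (h1 : a ≤ c + 1)
    (h2 : c ≤ b) :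
    ∑ j ∈ Finset.Icc a b, Δ j =
      (∑ j ∈ Finset.Icc a c, Δ j) + (∑ j ∈ Finset.Icc (c + 1) b, Δ j) := by
  rw [← Finset.sum_union]
  · congr 1; ext x; simp only [Finset.mem_Icc, Finset.mem_union]; omega
  · rw [Finset.disjoint_left]; intro x hx hx'
    simp only [Finset.mem_Icc] at hx hx'; omega

private lemma qh_tele (f Δ : ℤ → Matrix (Fin n) (Fin n) K)
    (hΔ : ∀ x : ℤ, Δ x = f (x + 1) - f x) (a : ℤ) :
    ∀ b : ℤ, a - 1 ≤ b → f (b + 1) - f a = ∑ j ∈ Finset.Icc a b, Δ j := by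
  refine Int.le_induction ?_ ?_
  · rw [Finset.Icc_eq_empty (by omega), Finset.sum_empty,
      show a - 1 + 1 = a by ring, sub_self]
  · intro b hab ih
    rw [qh_Wtop Δ (by omega), show b + 1 - 1 = b by ring, ← ih, hΔ (b + 1)]
    abel

private lemma qh_sum_mulVec {ι : Type*} (s : Finset ι) (g : ι → Matrix (Fin n) (Fin n) K)
    (x : Fin n → K) : (∑ j ∈ s, g j) *ᵥ x = ∑ j ∈ s, (g j) *ᵥ x := by
  classical
  induction s using Finset.induction with
  | empty => simp [Matrix.zero_mulVec]
  | insert _ _ hnotmem ih =>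
    rw [Finset.sum_insert hnotmem, Finset.sum_insert hnotmem, add_mulVec, ih]

private lemma qh_cancel {A B X Y : Matrix (Fin n) (Fin n) K}
    (h1 : (A + X) - (Y + B) = 0) (h2 : X - Y = 0) : A = B := by
  have : A - B = ((A + X) - (Y + B)) - (X - Y) := by abel
  rw [h1, h2, sub_zero] at this
  exact sub_eq_zero.mp this

end QhAux

/-- palindromicity: With `Δ` the delta map of a
1-quasihomomorphism `f : ℤ → Sym(n×n, K)` with `f 1 = 0`, `Lᵢ = im (Δ i)` and
`Vₘ = L₋ₘ₋₁ + ⋯ + L₋₂ + L₁ + ⋯ + Lₘ`, if `V_m ⊋ V_{m-1}` (and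
`dim Σ_{i ≠ 0, -1} Lᵢ ≥ 3`), then
`Δ i = Δ (m - i) = Δ (-i - 1) = Δ (i - m - 1)` for `i = 1, ..., m - 1`. -/
theorem stmt_14 {K : Type*} [Field K] [CharZero K] {n : ℕ}
    (f : ℤ → Matrix (Fin n) (Fin n) K)
    (hsym : ∀ x, (f x).IsSymm) (hf1 : f 1 = 0)
    (hquasi : ∀ x y : ℤ, (f (x + y) - f x - f y).rank ≤ 1)
    (Δ : ℤ → Matrix (Fin n) (Fin n) K) (hΔ : ∀ x : ℤ, Δ x = f (x + 1) - f x)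
    (L : ℤ → Submodule K (Fin n → K))
    (hL : ∀ i : ℤ, L i = LinearMap.range (Δ i).mulVecLin)
    (V : ℕ → Submodule K (Fin n → K))
    (hV : ∀ m : ℕ, V m =
      ⨆ i ∈ {j : ℤ | (1 ≤ j ∧ j ≤ (m : ℤ)) ∨ (-(m : ℤ) - 1 ≤ j ∧ j ≤ -2)}, L i)
    (hdim3 : 3 ≤ Module.finrank K ↥(⨆ i ∈ {j : ℤ | j ≠ 0 ∧ j ≠ -1}, L i))
    (m : ℕ) (hm : 1 ≤ m) (hVm : V (m - 1) < V m) :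
    ∀ i : ℤ, 1 ≤ i → i ≤ (m : ℤ) - 1 →
      Δ i = Δ ((m : ℤ) - i) ∧ Δ ((m : ℤ) - i) = Δ (-i - 1) ∧
        Δ (-i - 1) = Δ (i - (m : ℤ) - 1) := by
  intro i hi1 hi2
  set M : ℤ := (m : ℤ) with hMdef
  have hM2 : 2 ≤ M := by omega
  -- basic facts about Δ
  have hΔsymm : ∀ t : ℤ, (Δ t).IsSymm := by
    intro t; rw [hΔ]; exact qh_isSymm_sub (hsym _) (hsym _)
  have hΔrank : ∀ t : ℤ, (Δ t).rank ≤ 1 := by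
    intro t
    have h := hquasi t 1
    rw [hf1, sub_zero] at h
    rw [hΔ]; exact h
  have tele : ∀ a b : ℤ, a - 1 ≤ b → f (b + 1) - f a = ∑ j ∈ Finset.Icc a b, Δ j :=
    fun a => qh_tele f Δ hΔ a
  -- the two window rank facts
  have factP : ∀ a b : ℤ, a ≤ b →
      ((∑ j ∈ Finset.Icc a b, Δ j) - (∑ j ∈ Finset.Icc 1 (b - a), Δ j)).rank ≤ 1 := by
    intro a b hab
    have h := hquasi (b + 1 - a) a
    rw [show b + 1 - a + a = b + 1 by ring] at h
    have e1 : f (b + 1) - f a = ∑ j ∈ Finset.Icc a b, Δ j := tele a b (by omega)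
    have e2 : f (b - a + 1) = ∑ j ∈ Finset.Icc 1 (b - a), Δ j := by
      have h2 := tele 1 (b - a) (by omega)
      rwa [hf1, sub_zero] at h2
    have key : f (b + 1) - f (b + 1 - a) - f a
        = (∑ j ∈ Finset.Icc a b, Δ j) - (∑ j ∈ Finset.Icc 1 (b - a), Δ j) := by
      calc f (b + 1) - f (b + 1 - a) - f a
          = (f (b + 1) - f a) - f (b - a + 1) := by
            rw [show b + 1 - a = b - a + 1 by ring]; abel
        _ = _ := by rw [e1, e2]
    rw [← key]; exact h
  have factN : ∀ a b : ℤ, a ≤ b →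
      ((∑ j ∈ Finset.Icc (a - b - 1) 0, Δ j) - (∑ j ∈ Finset.Icc a b, Δ j)).rank ≤ 1 := by
    intro a b hab
    have h := hquasi (a - b - 1) (b + 1)
    rw [show a - b - 1 + (b + 1) = a by ring] at h
    have e1 : f (b + 1) - f a = ∑ j ∈ Finset.Icc a b, Δ j := tele a b (by omega)
    have e3 : -f (a - b - 1) = ∑ j ∈ Finset.Icc (a - b - 1) 0, Δ j := by
      have h3 := tele (a - b - 1) 0 (by omega)
      rwa [show (0:ℤ) + 1 = 1 by ring, hf1, zero_sub] at h3
    have key : f a - f (a - b - 1) - f (b + 1)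
        = (∑ j ∈ Finset.Icc (a - b - 1) 0, Δ j) - (∑ j ∈ Finset.Icc a b, Δ j) := by
      rw [← e1, ← e3]; abel
    rw [← key]; exact h
  -- Δ 0 + Δ (-1) = 0
  have S0 : Δ 0 + Δ (-1) = 0 := by
    by_contra hS0
    have hSsymm : (Δ 0 + Δ (-1)).IsSymm := qh_isSymm_add (hΔsymm 0) (hΔsymm (-1))
    have hR1 : ∀ t : ℤ, ((-(Δ t)) + (Δ 0 + Δ (-1))).rank ≤ 1 := by
      intro t
      have h := hquasi (t + 1) (-1)
      rw [show t + 1 + (-1) = t by ring] at h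
      have key : f t - f (t + 1) - f (-1) = (-(Δ t)) + (Δ 0 + Δ (-1)) := by
        rw [hΔ t, hΔ 0, hΔ (-1), show (0:ℤ) + 1 = 1 by ring,
          show (-1:ℤ) + 1 = 0 by ring, hf1]
        abel
      rw [← key]; exact h
    have hall : ∀ t : ℤ, L t ≤ LinearMap.range (Δ 0 + Δ (-1)).mulVecLin := by
      intro t
      rw [hL]
      by_contra hng
      exact hS0 (qh_keyP (LinearMap.range (Δ 0 + Δ (-1)).mulVecLin)
        hSsymm (qh_isSymm_neg (hΔsymm t))
        (by rw [qh_rank_neg]; exact hΔrank t) le_rfl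
        (by rw [qh_range_neg]; exact hng) (hR1 t))
    have hsup : (⨆ i ∈ {j : ℤ | j ≠ 0 ∧ j ≠ -1}, L i)
        ≤ LinearMap.range (Δ 0 + Δ (-1)).mulVecLin :=
      iSup₂_le fun t _ => hall t
    have hfin2 : finrank K (LinearMap.range (Δ 0 + Δ (-1)).mulVecLin) ≤ 2 := by
      have hle : LinearMap.range (Δ 0 + Δ (-1)).mulVecLin ≤
          LinearMap.range (Δ 0).mulVecLin ⊔ LinearMap.range (Δ (-1)).mulVecLin := by
        rintro y ⟨x, rfl⟩
        rw [mulVecLin_apply, add_mulVec]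
        exact Submodule.add_mem_sup ⟨x, rfl⟩ ⟨x, rfl⟩
      have h1 := Submodule.finrank_mono hle
      have h2 := Submodule.finrank_sup_add_finrank_inf_eq
        (LinearMap.range (Δ 0).mulVecLin) (LinearMap.range (Δ (-1)).mulVecLin)
      have h3 := hΔrank 0
      have h4 := hΔrank (-1)
      unfold Matrix.rank at h3 h4
      omega
    have h5 := Submodule.finrank_mono hsup
    omega
  -- description of V (m - 1)
  have hVp : V (m - 1) = ⨆ i ∈ {j : ℤ | (1 ≤ j ∧ j ≤ M - 1) ∨ (-M ≤ j ∧ j ≤ -2)}, L i := by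
    rw [hV (m - 1)]
    have hsetP : {j : ℤ | (1 ≤ j ∧ j ≤ ((m - 1 : ℕ) : ℤ)) ∨ (-((m - 1 : ℕ) : ℤ) - 1 ≤ j ∧ j ≤ -2)}
        = {j : ℤ | (1 ≤ j ∧ j ≤ M - 1) ∨ (-M ≤ j ∧ j ≤ -2)} := by
      have hcast : ((m - 1 : ℕ) : ℤ) = M - 1 := by omega
      ext j
      simp only [Set.mem_setOf_eq, hcast]
      constructor <;> (intro h; omega)
    rw [hsetP]
  have LleP : ∀ j : ℤ, ((1 ≤ j ∧ j ≤ M - 1) ∨ (-M ≤ j ∧ j ≤ -2)) →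
      LinearMap.range (Δ j).mulVecLin ≤ V (m - 1) := by
    intro j hj
    rw [hVp, ← hL]
    exact le_iSup₂ (f := fun (i : ℤ) (_ : i ∈ {j : ℤ | (1 ≤ j ∧ j ≤ M - 1) ∨ (-M ≤ j ∧ j ≤ -2)}) => L i) j hj
  have rangeW : ∀ a b : ℤ,
      (∀ j : ℤ, a ≤ j → j ≤ b → ((1 ≤ j ∧ j ≤ M - 1) ∨ (-M ≤ j ∧ j ≤ -2))) →
      LinearMap.range (∑ j ∈ Finset.Icc a b, Δ j).mulVecLin ≤ V (m - 1) := by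
    intro a b hab
    rintro y ⟨x, rfl⟩
    rw [mulVecLin_apply, qh_sum_mulVec]
    apply Submodule.sum_mem
    intro j hj
    rw [Finset.mem_Icc] at hj
    exact LleP j (hab j hj.1 hj.2) ⟨x, rfl⟩
  have rangeSub : ∀ {A B : Matrix (Fin n) (Fin n) K},
      LinearMap.range A.mulVecLin ≤ V (m - 1) → LinearMap.range B.mulVecLin ≤ V (m - 1) →
      LinearMap.range (A - B).mulVecLin ≤ V (m - 1) := by
    intro A B hA hB
    rintro y ⟨x, rfl⟩
    rw [mulVecLin_apply, sub_mulVec]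
    exact Submodule.sub_mem _ (hA ⟨x, rfl⟩) (hB ⟨x, rfl⟩)
  have Wsymm : ∀ a b : ℤ, (∑ j ∈ Finset.Icc a b, Δ j).IsSymm := by
    intro a b
    unfold Matrix.IsSymm
    rw [Matrix.transpose_sum]
    exact Finset.sum_congr rfl fun j _ => hΔsymm j
  have Wpair : ∀ a : ℤ, a ≤ -1 →
      (∑ j ∈ Finset.Icc a 0, Δ j) = ∑ j ∈ Finset.Icc a (-2), Δ j := by
    intro a ha
    rw [qh_Wconcat Δ (show a ≤ (-2) + 1 by omega) (show (-2:ℤ) ≤ 0 by omega)]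
    have h1 : ∑ j ∈ Finset.Icc (-2 + 1 : ℤ) 0, Δ j = Δ (-1) + Δ 0 := by
      rw [show (-2 + 1 : ℤ) = -1 by ring, qh_Wbot Δ (show (-1:ℤ) ≤ 0 by omega),
        show (-1 + 1 : ℤ) = 0 by ring, Finset.Icc_self, Finset.sum_singleton]
    rw [h1, show Δ (-1) + Δ 0 = 0 by rw [add_comm]; exact S0, add_zero]
  -- case disjunction: a new line appears at index M or at index -M-1
  have hcases : ¬ LinearMap.range (Δ M).mulVecLin ≤ V (m - 1) ∨
      ¬ LinearMap.range (Δ (-M - 1)).mulVecLin ≤ V (m - 1) := by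
    by_contra hc
    push_neg at hc
    obtain ⟨h1, h2⟩ := hc
    have hVle : V m ≤ V (m - 1) := by
      rw [hV m]
      refine iSup₂_le ?_
      intro j hj
      simp only [Set.mem_setOf_eq] at hj
      rw [hL]
      by_cases hjM : j = M
      · subst hjM; exact h1
      · by_cases hjM' : j = -M - 1
        · subst hjM'; exact h2
        · exact LleP j (by omega)
    exact absurd hVle hVm.not_ge
  rcases hcases with hnot | hnot
  · -- Case 1 : the line of Δ M is new
    have famB : ∀ k : ℤ, 0 ≤ k → k ≤ M - 1 →
        (∑ j ∈ Finset.Icc (M - k) (M - 1), Δ j) - (∑ j ∈ Finset.Icc 1 k, Δ j) = 0 := by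
      intro k h0 h1
      have hrank := factP (M - k) M (by omega)
      rw [show M - (M - k) = k by ring] at hrank
      have hid : (∑ j ∈ Finset.Icc (M - k) M, Δ j) - (∑ j ∈ Finset.Icc 1 k, Δ j)
          = Δ M + ((∑ j ∈ Finset.Icc (M - k) (M - 1), Δ j) - (∑ j ∈ Finset.Icc 1 k, Δ j)) := by
        rw [qh_Wtop Δ (show M - k ≤ M by omega)]
        abel
      rw [hid] at hrank
      exact qh_keyP (V (m - 1)) (qh_isSymm_sub (Wsymm _ _) (Wsymm _ _)) (hΔsymm M)
        (hΔrank M)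
        (rangeSub (rangeW _ _ (by intro j hj1 hj2; omega))
          (rangeW _ _ (by intro j hj1 hj2; omega)))
        hnot hrank
    have famC : ∀ k : ℤ, -1 ≤ k → k ≤ M - 2 →
        (∑ j ∈ Finset.Icc (-k - 2) (-2), Δ j)
          - (∑ j ∈ Finset.Icc (M - k - 1) (M - 1), Δ j) = 0 := by
      intro k h0 h1
      by_cases hk : k = -1
      · subst hk
        rw [Finset.Icc_eq_empty (by omega), Finset.Icc_eq_empty (by omega)]
        simp
      have h0' : 0 ≤ k := by omega
      have hrank := factN (M - k - 1) M (by omega)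
      rw [show M - k - 1 - M - 1 = -k - 2 by ring] at hrank
      have hid : (∑ j ∈ Finset.Icc (-k - 2) 0, Δ j) - (∑ j ∈ Finset.Icc (M - k - 1) M, Δ j)
          = (-(Δ M)) + ((∑ j ∈ Finset.Icc (-k - 2) (-2), Δ j)
            - (∑ j ∈ Finset.Icc (M - k - 1) (M - 1), Δ j)) := by
        rw [Wpair _ (by omega), qh_Wtop Δ (show M - k - 1 ≤ M by omega)]
        abel
      rw [hid] at hrank
      exact qh_keyP (V (m - 1)) (qh_isSymm_sub (Wsymm _ _) (Wsymm _ _))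
        (qh_isSymm_neg (hΔsymm M)) (by rw [qh_rank_neg]; exact hΔrank M)
        (rangeSub (rangeW _ _ (by intro j hj1 hj2; omega))
          (rangeW _ _ (by intro j hj1 hj2; omega)))
        (by rw [qh_range_neg]; exact hnot) hrank
    have eqA : ∀ t : ℤ, 1 ≤ t → t ≤ M - 1 → Δ (M - t) = Δ t := by
      intro t ht1 ht2
      have e1 := famB t (by omega) (by omega)
      have e2 := famB (t - 1) (by omega) (by omega)
      rw [show M - (t - 1) = M - t + 1 by ring] at e2
      rw [qh_Wbot Δ (show M - t ≤ M - 1 by omega), qh_Wtop Δ (show (1:ℤ) ≤ t by omega)] at e1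
      rw [show t - 1 = t - 1 by ring] at e1
      exact qh_cancel e1 e2
    have eqB : ∀ k : ℤ, 1 ≤ k → k ≤ M - 1 → Δ (-k - 1) = Δ (M - k) := by
      intro k h1 h2
      have e1 := famC (k - 1) (by omega) (by omega)
      have e2 := famC (k - 2) (by omega) (by omega)
      rw [show -(k - 1) - 2 = -k - 1 by ring, show M - (k - 1) - 1 = M - k by ring] at e1
      rw [show -(k - 2) - 2 = -k - 1 + 1 by ring, show M - (k - 2) - 1 = M - k + 1 by ring] at e2
      rw [qh_Wbot Δ (show -k - 1 ≤ -2 by omega), qh_Wbot Δ (show M - k ≤ M - 1 by omega)] at e1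
      rw [add_comm (Δ (M - k)) (∑ j ∈ Finset.Icc (M - k + 1) (M - 1), Δ j)] at e1
      exact qh_cancel e1 e2
    have g1 : Δ i = Δ (M - i) := (eqA i hi1 hi2).symm
    have g2 : Δ (M - i) = Δ (-i - 1) := (eqB i hi1 hi2).symm
    have g3 : Δ (-i - 1) = Δ (i - M - 1) := by
      have h := eqB (M - i) (by omega) (by omega)
      rw [show -(M - i) - 1 = i - M - 1 by ring, show M - (M - i) = i by ring] at h
      exact (eqB i hi1 hi2).trans ((eqA i hi1 hi2).trans h.symm)
    exact ⟨g1, g2, g3⟩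
  · -- Case 2 : the line of Δ (-M - 1) is new
    have famA : ∀ t : ℤ, 0 ≤ t → t ≤ M - 1 →
        (∑ j ∈ Finset.Icc (-M) (t - M - 1), Δ j) - (∑ j ∈ Finset.Icc 1 t, Δ j) = 0 := by
      intro t h0 h1
      have hrank := factN (t - M) t (by omega)
      rw [show t - M - t - 1 = -M - 1 by ring] at hrank
      have hid : (∑ j ∈ Finset.Icc (-M - 1) 0, Δ j) - (∑ j ∈ Finset.Icc (t - M) t, Δ j)
          = Δ (-M - 1) + ((∑ j ∈ Finset.Icc (-M) (t - M - 1), Δ j)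
            - (∑ j ∈ Finset.Icc 1 t, Δ j)) := by
        rw [qh_Wbot Δ (show -M - 1 ≤ 0 by omega), show -M - 1 + 1 = -M by ring,
          Wpair (-M) (by omega),
          qh_Wconcat Δ (show t - M ≤ 0 + 1 by omega) (show (0:ℤ) ≤ t by omega),
          show (0:ℤ) + 1 = 1 by ring, Wpair (t - M) (by omega),
          qh_Wconcat Δ (a := -M) (c := t - M - 1) (b := -2) (show -M ≤ t - M - 1 + 1 by omega)
            (show t - M - 1 ≤ -2 by omega),
          show t - M - 1 + 1 = t - M by ring]
        abel
      rw [hid] at hrank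
      exact qh_keyP (V (m - 1)) (qh_isSymm_sub (Wsymm _ _) (Wsymm _ _))
        (hΔsymm (-M - 1)) (hΔrank (-M - 1))
        (rangeSub (rangeW _ _ (by intro j hj1 hj2; omega))
          (rangeW _ _ (by intro j hj1 hj2; omega)))
        hnot hrank
    have famD : ∀ k : ℤ, -1 ≤ k → k ≤ M - 2 →
        (∑ j ∈ Finset.Icc (-k - 2) (-2), Δ j) - (∑ j ∈ Finset.Icc (-M) (-M + k), Δ j) = 0 := by
      intro k h0 h1
      by_cases hk : k = -1
      · subst hk
        rw [Finset.Icc_eq_empty (by omega), Finset.Icc_eq_empty (by omega)]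
        simp
      have h0' : 0 ≤ k := by omega
      have hrank := factN (-M - 1) (-M + k) (by omega)
      rw [show -M - 1 - (-M + k) - 1 = -k - 2 by ring] at hrank
      have hid : (∑ j ∈ Finset.Icc (-k - 2) 0, Δ j) - (∑ j ∈ Finset.Icc (-M - 1) (-M + k), Δ j)
          = (-(Δ (-M - 1))) + ((∑ j ∈ Finset.Icc (-k - 2) (-2), Δ j)
            - (∑ j ∈ Finset.Icc (-M) (-M + k), Δ j)) := by
        rw [Wpair _ (by omega), qh_Wbot Δ (show -M - 1 ≤ -M + k by omega),
          show -M - 1 + 1 = -M by ring]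
        abel
      rw [hid] at hrank
      exact qh_keyP (V (m - 1)) (qh_isSymm_sub (Wsymm _ _) (Wsymm _ _))
        (qh_isSymm_neg (hΔsymm (-M - 1))) (by rw [qh_rank_neg]; exact hΔrank (-M - 1))
        (rangeSub (rangeW _ _ (by intro j hj1 hj2; omega))
          (rangeW _ _ (by intro j hj1 hj2; omega)))
        (by rw [qh_range_neg]; exact hnot) hrank
    have eqA2 : ∀ t : ℤ, 1 ≤ t → t ≤ M - 1 → Δ (t - M - 1) = Δ t := by
      intro t h1 h2
      have e1 := famA t (by omega) (by omega)
      have e2 := famA (t - 1) (by omega) (by omega)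
      rw [show t - 1 - M - 1 = t - M - 1 - 1 by ring] at e2
      rw [qh_Wtop Δ (show -M ≤ t - M - 1 by omega), qh_Wtop Δ (show (1:ℤ) ≤ t by omega)] at e1
      rw [add_comm (∑ j ∈ Finset.Icc (-M) (t - M - 1 - 1), Δ j) (Δ (t - M - 1))] at e1
      exact qh_cancel e1 e2
    have eqB2 : ∀ k : ℤ, 0 ≤ k → k ≤ M - 2 → Δ (-k - 2) = Δ (-M + k) := by
      intro k h1 h2
      have e1 := famD k (by omega) (by omega)
      have e2 := famD (k - 1) (by omega) (by omega)
      rw [show -(k - 1) - 2 = -k - 2 + 1 by ring, show -M + (k - 1) = -M + k - 1 by ring] at e2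
      rw [qh_Wbot Δ (show -k - 2 ≤ -2 by omega), qh_Wtop Δ (show -M ≤ -M + k by omega)] at e1
      exact qh_cancel e1 e2
    have hA := eqA2 i hi1 hi2
    have hA' := eqA2 (M - i) (by omega) (by omega)
    rw [show M - i - M - 1 = -i - 1 by ring] at hA'
    have hB := eqB2 (i - 1) (by omega) (by omega)
    rw [show -(i - 1) - 2 = -i - 1 by ring, show -M + (i - 1) = i - M - 1 by ring] at hB
    exact ⟨hA.symm.trans (hB.symm.trans hA'), hA'.symm, hB⟩
end

section
/- Suppose f : ℤ → Sym(n×n, K) with f(1) = 0 and Δ(x) = f(x+1) − f(x) is APAP with period p on all of ℤ, and set A = (Δ(1)+...+Δ(p−2))/p. Then for every x ∈ ℤ with x ≡ 0 mod p (writing x = ap+p), rank(f(x) − x·A) ≤ 1. -/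
/-- A two-sided infinite sequence `Δ : ℤ → H` is APAP (almost periodic almost
palindromic) with period `p` on all of `ℤ`. -/
def IsAPAPZ {H : Type*} [AddCommGroup H] (p : ℕ) (Δ : ℤ → H) : Prop :=
  (∀ i : ℤ, ¬ ((p : ℤ) ∣ (i + 1)) → ¬ ((p : ℤ) ∣ i) → Δ (i + p) = Δ i) ∧
  (∀ j : ℤ, (p : ℤ) ∣ j → Δ (j - 1) + Δ j = 0) ∧
  (∀ i : ℤ, 1 ≤ i → i ≤ (p : ℤ) - 2 → Δ ((p : ℤ) - 1 - i) = Δ i)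

lemma matrix_rank_neg {K : Type*} [Field K] {n : ℕ} (M : Matrix (Fin n) (Fin n) K) :
    (-M).rank = M.rank := by
  unfold Matrix.rank
  have h : (-M).mulVecLin = -(M.mulVecLin) := by
    ext v
    simp [Matrix.mulVecLin_apply, Matrix.neg_mulVec]
  rw [h, LinearMap.range_neg]


/-- If `f : ℤ → Sym(n×n, K)` has `f 1 = 0` and its delta map is
APAP with period `p` on all of `ℤ` (each `Δ i` of rank at most 1), and
`A = (Δ 1 + ⋯ + Δ (p-2)) / p`, then `rank (f x - x • A) ≤ 1` for every
multiple `x` of `p`. -/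
theorem stmt_18 {K : Type*} [Field K] [CharZero K] {n : ℕ}
    (f : ℤ → Matrix (Fin n) (Fin n) K)
    (hsym : ∀ x, (f x).IsSymm) (hf1 : f 1 = 0)
    (Δ : ℤ → Matrix (Fin n) (Fin n) K) (hΔ : ∀ x : ℤ, Δ x = f (x + 1) - f x)
    (hrk : ∀ i : ℤ, (Δ i).rank ≤ 1)
    (p : ℕ) (hp : 2 ≤ p) (hAPAP : IsAPAPZ p Δ)
    (A : Matrix (Fin n) (Fin n) K)
    (hA : A = ((p : K)⁻¹) • ∑ i ∈ Finset.range (p - 2), Δ (i + 1)) :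
    ∀ x : ℤ, (p : ℤ) ∣ x → (f x - x • A).rank ≤ 1 := by
  obtain ⟨hper, hpal, _⟩ := hAPAP
  set S : Matrix (Fin n) (Fin n) K := ∑ i ∈ Finset.range (p - 2), Δ (i + 1) with hS
  have hpK : (p : K) ≠ 0 := Nat.cast_ne_zero.mpr (by omega)
  have hpA : (p : ℤ) • A = S := by
    rw [hA]
    rw [← Int.cast_smul_eq_zsmul K]
    push_cast
    rw [smul_smul, mul_inv_cancel₀ hpK, one_smul]
  -- telescoping
  have tel : ∀ (a : ℤ) (m : ℕ), f (a + m) = f a + ∑ i ∈ Finset.range m, Δ (a + i) := by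
    intro a m
    induction m with
    | zero => simp
    | succ m ih =>
      rw [Finset.sum_range_succ, ← add_assoc, ← ih, hΔ (a + m)]
      push_cast
      ring_nf
      abel
  -- periodicity for all integer shifts
  have per : ∀ (i : ℤ), ¬ ((p : ℤ) ∣ i) → ¬ ((p : ℤ) ∣ (i + 1)) → ∀ k : ℤ,
      Δ (i + k * p) = Δ i := by
    intro i hi hi1 k
    induction k using Int.induction_on with
    | zero => simp
    | succ k ih =>
      have h1 : ¬ ((p : ℤ) ∣ (i + k * p + 1)) := by
        intro h
        exact hi1 (by
          have : (p : ℤ) ∣ k * p := dvd_mul_left _ _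
          have := dvd_sub h this
          rwa [show i + k * p + 1 - k * p = i + 1 by ring] at this)
      have h2 : ¬ ((p : ℤ) ∣ (i + k * p)) := by
        intro h
        exact hi (by
          have : (p : ℤ) ∣ k * p := dvd_mul_left _ _
          have := dvd_sub h this
          rwa [show i + k * p - k * p = i by ring] at this)
      have := hper (i + k * p) h1 h2
      rw [← ih, ← this]
      ring_nf
    | pred k ih =>
      have h1 : ¬ ((p : ℤ) ∣ (i + (-k - 1) * p + 1)) := by
        intro h
        exact hi1 (by
          have : (p : ℤ) ∣ (-k - 1) * p := dvd_mul_left _ _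
          have := dvd_sub h this
          rwa [show i + (-k - 1) * p + 1 - (-k - 1) * p = i + 1 by ring] at this)
      have h2 : ¬ ((p : ℤ) ∣ (i + (-k - 1) * p)) := by
        intro h
        exact hi (by
          have : (p : ℤ) ∣ (-k - 1) * p := dvd_mul_left _ _
          have := dvd_sub h this
          rwa [show i + (-k - 1) * p - (-k - 1) * p = i by ring] at this)
      have := hper (i + (-k - 1) * p) h1 h2
      rw [← ih, ← this]
      ring_nf
  -- block sum
  have block : ∀ k : ℤ, ∑ i ∈ Finset.range p, Δ (k * p + i)
      = Δ (k * p) + S - Δ ((k + 1) * p) := by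
    intro k
    obtain ⟨m, hm⟩ : ∃ m, p = m + 2 := ⟨p - 2, by omega⟩
    have hSm : S = ∑ i ∈ Finset.range m, Δ ((i : ℤ) + 1) := by
      rw [hS, hm]; simp
    have hlast : Δ (k * p + ((m : ℤ) + 1)) = - Δ ((k + 1) * p) := by
      have hd : (p : ℤ) ∣ (k + 1) * p := dvd_mul_left _ _
      have h0 := hpal ((k + 1) * p) hd
      have harg : k * (p : ℤ) + ((m : ℤ) + 1) = (k + 1) * p - 1 := by
        have : (m : ℤ) = (p : ℤ) - 2 := by rw [hm]; push_cast; ring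
        rw [this]; ring
      rw [harg]
      linear_combination (norm := abel) h0
    have hmid : ∀ i : ℕ, i < m → Δ (k * p + ((i : ℤ) + 1)) = Δ ((i : ℤ) + 1) := by
      intro i hilt'
      have hilt : (i : ℤ) < m := by exact_mod_cast hilt'
      have hpz : (m : ℤ) + 2 = (p : ℤ) := by rw [hm]; push_cast; ring
      have hnd1 : ¬ ((p : ℤ) ∣ ((i : ℤ) + 1)) := by
        intro h
        have := Int.le_of_dvd (by omega) h
        omega
      have hnd2 : ¬ ((p : ℤ) ∣ ((i : ℤ) + 1 + 1)) := by
        intro h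
        have := Int.le_of_dvd (by omega) h
        omega
      have := per ((i : ℤ) + 1) hnd1 hnd2 k
      rw [← this]; ring_nf
    rw [hm, Finset.sum_range_succ, Finset.sum_range_succ']
    push_cast
    have hpz : ((m:ℤ) + 2) = (p : ℤ) := by rw [hm]; push_cast; ring
    rw [hpz]
    calc ∑ x ∈ Finset.range m, Δ (k * (p:ℤ) + ((x:ℤ) + 1)) + Δ (k * (p:ℤ) + 0)
          + Δ (k * (p:ℤ) + ((m:ℤ) + 1))
        = (∑ x ∈ Finset.range m, Δ ((x:ℤ) + 1)) + Δ (k * (p:ℤ))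
          + (- Δ ((k + 1) * p)) := by
          rw [hlast, add_zero]
          congr 1
          congr 1
          exact Finset.sum_congr rfl (fun x hx => hmid x (Finset.mem_range.mp hx))
      _ = Δ (k * p) + S - Δ ((k + 1) * p) := by rw [← hSm]; abel
  -- main claim: f (k * p) + Δ (k * p) = (k * p) • A
  have main : ∀ k : ℤ, f (k * p) + Δ (k * p) = (k * p) • A := by
    intro k
    induction k using Int.induction_on with
    | zero =>
      simp only [zero_mul, zero_smul]
      have := hΔ 0
      rw [this]
      simp [hf1]
    | succ k ih =>
      have harg : ((k:ℤ) + 1) * p = (k:ℤ) * p + (p : ℤ) := by ring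
      have htel := tel ((k:ℤ) * p) p
      rw [block k, harg] at htel
      rw [harg, htel, add_smul, hpA, ← ih]
      abel
    | pred k ih =>
      have htel := tel ((-(k:ℤ) - 1) * p) p
      rw [block (-(k:ℤ) - 1)] at htel
      have harg2 : (-(k:ℤ) - 1 + 1) * (p:ℤ) = (-(k:ℤ)) * p := by ring
      have harg3 : (-(k:ℤ) - 1) * (p:ℤ) + (p : ℤ) = (-(k:ℤ)) * p := by ring
      rw [harg2, harg3] at htel
      have key : f ((-(k:ℤ) - 1) * p) + Δ ((-(k:ℤ) - 1) * p)
          = f ((-(k:ℤ)) * p) + Δ ((-(k:ℤ)) * p) - S := by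
        rw [htel]; abel
      rw [key, ih, ← hpA, ← sub_smul]
      congr 1
      ring
  intro x hx
  obtain ⟨k, hk⟩ := hx
  have hx' : f x - x • A = - Δ x := by
    have := main k
    rw [mul_comm] at hk
    rw [← hk] at this
    linear_combination (norm := abel) this
  rw [hx', matrix_rank_neg]
  exact hrk x
end
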